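/- arXiv:2103.11856 — 2 statements merged into one kernel-verified Lean document; each statement's English description precedes it below -/
import Mathlib

section
/- (Johnson-type bound, complementary form) L(W,n,w) ≤ ⌊(n/(n−w))·L(W,n−1,w)⌋. -/
def weight {n : ℕ} (B : Fin n → Bool) : ℕ :=
  (Finset.univ.filter (fun i => B i = true)).card

def hamming {n : ℕ} (B B' : Fin n → Bool) : ℕ :=
  (Finset.univ.filter (fun i => B i ≠ B' i)).card

theorem hamming_comm {n : ℕ} (B B' : Fin n → Bool) : hamming B B' = hamming B' B := by
  unfold hamming; congr 1; ext i; simp [ne_comm]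

def johnson (n w : ℕ) : SimpleGraph {B : Fin n → Bool // weight B = w} where
  Adj B B' := hamming B.1 B'.1 = 2
  symm := ⟨fun B B' h => by rwa [hamming_comm]⟩
  loopless := ⟨fun B h => by simp [hamming] at h⟩

structure GraphOrientation {V : Type*} (G : SimpleGraph V) where
  dir : V → V → Prop
  dir_adj : ∀ u v, dir u v → G.Adj u v
  total : ∀ u v, G.Adj u v → dir u v ∨ dir v u
  asymm : ∀ u v, dir u v → ¬ dir v u

noncomputable def outdeg {V : Type*} {G : SimpleGraph V} (Λ : GraphOrientation G) (v : V) : ℕ :=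
  {u | Λ.dir v u}.ncard

noncomputable def Lmax (W n w : ℕ) : ℕ :=
  sSup {k | ∃ Λ : GraphOrientation (johnson n w), k = {B | outdeg Λ B ≤ W}.ncard}

/-!
Every vertex of `J(n+1, w)` has `n + 1 - w` zero coordinates, so summing over the coordinates `i`
the number of vertices of outdegree `≤ W` with a zero at `i` counts each such vertex `n + 1 - w`
times. The vertices with a zero at `i` are the image of `J(n, w)` under inserting a zero at `i`, a
graph embedding; an orientation pulls back along it without increasing outdegrees, so each summand
is at most `L(W, n, w)`.
-/

namespace GraphOrientation

variable {V V' : Type*} {G : SimpleGraph V} {G' : SimpleGraph V'}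

def comap (Λ : GraphOrientation G') (f : G ↪g G') : GraphOrientation G where
  dir u v := Λ.dir (f u) (f v)
  dir_adj _ _ h := f.map_adj_iff.1 (Λ.dir_adj _ _ h)
  total _ _ h := Λ.total _ _ (f.map_adj_iff.2 h)
  asymm _ _ := Λ.asymm _ _

lemma outdeg_comap_le [Finite V'] (Λ : GraphOrientation G') (f : G ↪g G') (v : V) :
    outdeg (Λ.comap f) v ≤ outdeg Λ (f v) :=
  Set.ncard_le_ncard_of_injOn f (fun _ h => h) f.injective.injOn (Set.toFinite _)

lemma ncard_setOf_outdeg_le_inter_range_le [Finite V'] (Λ : GraphOrientation G') (f : G ↪g G')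
    (W : ℕ) : ({v | outdeg Λ v ≤ W} ∩ Set.range f).ncard ≤ {v | outdeg (Λ.comap f) v ≤ W}.ncard := by
  have : Finite V := Finite.of_injective f f.injective
  rw [← Set.image_preimage_eq_inter_range, Set.ncard_image_of_injective _ f.injective]
  exact Set.ncard_le_ncard (fun v hv => (outdeg_comap_le Λ f v).trans hv) (Set.toFinite _)

end GraphOrientation

lemma ncard_setOf_outdeg_le_le_Lmax {W n w : ℕ} (Λ : GraphOrientation (johnson n w)) :
    {B | outdeg Λ B ≤ W}.ncard ≤ Lmax W n w := by
  refine le_csSup ⟨Nat.card {B : Fin n → Bool // weight B = w}, ?_⟩ ⟨Λ, rfl⟩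
  rintro k ⟨Λ, rfl⟩
  exact (Set.ncard_le_ncard (Set.subset_univ _)).trans_eq (Set.ncard_univ _)

lemma Lmax_le {W n w k : ℕ} (h : ∀ Λ : GraphOrientation (johnson n w),
    {B | outdeg Λ B ≤ W}.ncard ≤ k) : Lmax W n w ≤ k :=
  csSup_le' (by rintro _ ⟨Λ, rfl⟩; exact h Λ)

section InsertFalse

variable {n w : ℕ}

lemma weight_insertNth_false (i : Fin (n + 1)) (B : Fin n → Bool) :
    weight (i.insertNth false B) = weight B := by
  simp only [weight, Finset.card_filter, Fin.sum_univ_succAbove _ i, Fin.insertNth_apply_same,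
    Fin.insertNth_apply_succAbove]
  simp

lemma hamming_insertNth_false (i : Fin (n + 1)) (B B' : Fin n → Bool) :
    hamming (i.insertNth false B) (i.insertNth false B') = hamming B B' := by
  simp only [hamming, Finset.card_filter, Fin.sum_univ_succAbove _ i, Fin.insertNth_apply_same,
    Fin.insertNth_apply_succAbove]
  simp

def johnsonInsertFalse (i : Fin (n + 1)) : johnson n w ↪g johnson (n + 1) w where
  toFun B := ⟨i.insertNth false B.1, (weight_insertNth_false i B.1).trans B.2⟩
  inj' B B' h := Subtype.ext <| funext fun j => by
    simpa using congrFun (congrArg Subtype.val h) (i.succAbove j)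
  map_rel_iff' := (hamming_insertNth_false i _ _).congr_left

lemma range_johnsonInsertFalse (i : Fin (n + 1)) :
    Set.range (johnsonInsertFalse (w := w) i) = {B | B.1 i = false} := by
  ext B
  constructor
  · rintro ⟨B', rfl⟩
    exact Fin.insertNth_apply_same (α := fun _ => Bool) _ _ _
  · intro hB
    have hins : i.insertNth false (i.removeNth B.1) = B.1 := by
      rw [← show B.1 i = false from hB]; exact Fin.insertNth_self_removeNth i B.1
    refine ⟨⟨i.removeNth B.1, ?_⟩, Subtype.ext hins⟩
    rw [← weight_insertNth_false i, hins]; exact B.2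

end InsertFalse

lemma card_filter_eq_false_of_weight_eq {n w : ℕ} {B : Fin n → Bool} (hB : weight B = w) :
    (Finset.univ.filter fun i => B i = false).card = n - w := by
  have h := Finset.card_filter_add_card_filter_not (s := Finset.univ) (fun i => B i = true)
  simp only [Bool.not_eq_true, Finset.card_univ, Fintype.card_fin] at h
  rw [weight] at hB
  omega

lemma sum_ncard_inter_setOf_eq_false {n w : ℕ} (S : Set {B : Fin n → Bool // weight B = w}) :
    ∑ i, (S ∩ {B | B.1 i = false}).ncard = (n - w) * S.ncard := by
  classical
  calc ∑ i, (S ∩ {B | B.1 i = false}).ncard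
      = ∑ i, ∑ B ∈ S.toFinset, if B.1 i = false then 1 else 0 := by
        simp only [Set.ncard_eq_toFinset_card', Set.toFinset_inter, Set.toFinset_ofPred,
          Finset.inter_filter, Finset.inter_univ, Finset.card_filter]
    _ = ∑ B ∈ S.toFinset, (Finset.univ.filter fun i => B.1 i = false).card := by
        rw [Finset.sum_comm]
        simp only [Finset.card_filter]
    _ = (n - w) * S.ncard := by
        rw [Finset.sum_congr rfl fun B _ => card_filter_eq_false_of_weight_eq B.2,
          Finset.sum_const, smul_eq_mul, mul_comm, Set.ncard_eq_toFinset_card']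

lemma sub_mul_ncard_setOf_outdeg_le_le {W n w : ℕ} (Λ : GraphOrientation (johnson (n + 1) w)) :
    (n + 1 - w) * {B | outdeg Λ B ≤ W}.ncard ≤ (n + 1) * Lmax W n w :=
  calc (n + 1 - w) * {B | outdeg Λ B ≤ W}.ncard
      = ∑ i, ({B | outdeg Λ B ≤ W} ∩ Set.range (johnsonInsertFalse i)).ncard := by
        simp only [range_johnsonInsertFalse, sum_ncard_inter_setOf_eq_false]
    _ ≤ ∑ _i : Fin (n + 1), Lmax W n w := Finset.sum_le_sum fun i _ =>
        (Λ.ncard_setOf_outdeg_le_inter_range_le _ W).trans (ncard_setOf_outdeg_le_le_Lmax _)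
    _ = (n + 1) * Lmax W n w := by simp

theorem stmt11 (W n w : ℕ) (hw : w < n) :
    Lmax W n w ≤ n * Lmax W (n - 1) w / (n - w) := by
  obtain ⟨m, rfl⟩ : ∃ m, n = m + 1 := ⟨n - 1, by omega⟩
  refine Lmax_le fun Λ => ?_
  rw [Nat.add_sub_cancel, Nat.le_div_iff_mul_le (by omega), mul_comm]
  exact sub_mul_ncard_setOf_outdeg_le_le Λ
end

section
/- In the Johnson graph J(n,w), let τ(B) = Σ_i i·B_i mod (n−2W) for B ∈ S(n,w), where n ≥ 4W > 0; then the subgraph induced on any residue class {B ∈ S(n,w) : τ(B) = c} has maximum degree at most 2W, i.e. each vertex has at most 2W neighbors within its own residue class. -/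
def tauM {n : ℕ} (m : ℕ) (B : Fin n → Bool) : ℕ :=
  (∑ i : Fin n, (i.1 + 1) * (if B i then 1 else 0)) % m

open Finset in
lemma aux15 {n : ℕ} (m W : ℕ) (hW : 0 < W) (hm2 : 2 * W ≤ m) (hmn : n = m + 2 * W)
    (B B' : Fin n → Bool) (i j : Fin n) (hlt : i.1 < j.1)
    (hD : Finset.univ.filter (fun k => B k ≠ B' k) = {i, j})
    (hw : weight B' = weight B)
    (ht : tauM m B' = tauM m B) :
    i.1 < 2 * W ∧ j.1 = i.1 + m := by
  classical
  have hij : i ≠ j := fun h => by simp [h] at hlt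
  have hmem : ∀ k, B k ≠ B' k ↔ (k = i ∨ k = j) := by
    intro k
    have := Finset.ext_iff.mp hD k
    simpa using this
  have hBi : B' i = !B i := by
    have := (hmem i).mpr (Or.inl rfl)
    revert this; cases B i <;> cases B' i <;> simp
  have hBj : B' j = !B j := by
    have := (hmem j).mpr (Or.inr rfl)
    revert this; cases B j <;> cases B' j <;> simp
  set f : Bool → ℤ := fun b => if b then 1 else 0 with hf
  have hwsum : ∀ C : Fin n → Bool, (weight C : ℤ) = ∑ k, f (C k) := by
    intro C
    unfold weight
    rw [Finset.card_filter]
    push_cast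
    simp [hf]
  have hsupp : ∀ (φ : Fin n → ℤ), (∀ k, k ≠ i → k ≠ j → φ k = 0) →
      ∑ k, φ k = φ i + φ j := by
    intro φ hφ
    rw [← Finset.sum_pair hij]
    refine (Finset.sum_subset (Finset.subset_univ _) ?_).symm
    intro k _ hk
    simp only [Finset.mem_insert, Finset.mem_singleton, not_or] at hk
    exact hφ k hk.1 hk.2
  have hoffd : ∀ k : Fin n, k ≠ i → k ≠ j → B' k = B k := by
    intro k hki hkj
    by_contra hne
    rcases (hmem k).mp (fun h => hne h.symm) with h | h
    exacts [hki h, hkj h]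
  have hzero : f (B' i) - f (B i) + (f (B' j) - f (B j)) = 0 := by
    have h1 : ∑ k, (f (B' k) - f (B k)) = 0 := by
      rw [Finset.sum_sub_distrib, ← hwsum, ← hwsum, hw, sub_self]
    rw [← h1, hsupp (fun k => f (B' k) - f (B k))]
    intro k hki hkj
    rw [hoffd k hki hkj, sub_self]
  have hopp : B j = !B i := by
    revert hzero
    rw [hBi, hBj]
    cases B i <;> cases B j <;> simp [hf]
  -- tau part
  have hmod : (∑ k : Fin n, (k.1 + 1) * (if B' k then 1 else 0)) ≡
      (∑ k : Fin n, (k.1 + 1) * (if B k then 1 else 0)) [MOD m] := ht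
  have hdvd0 : (m:ℤ) ∣ ((∑ k : Fin n, (k.1 + 1) * (if B k then 1 else 0) : ℕ) : ℤ)
      - ((∑ k : Fin n, (k.1 + 1) * (if B' k then 1 else 0) : ℕ) : ℤ) :=
    (Nat.modEq_iff_dvd).mp hmod
  have hcast : ∀ C : Fin n → Bool,
      ((∑ k : Fin n, (k.1 + 1) * (if C k then 1 else 0) : ℕ) : ℤ)
        = ∑ k : Fin n, ((k.1 : ℤ) + 1) * f (C k) := by
    intro C
    push_cast
    simp [hf]
  have hdiffsum : (∑ k : Fin n, ((k.1 : ℤ) + 1) * f (B k))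
      - (∑ k : Fin n, ((k.1 : ℤ) + 1) * f (B' k))
      = ((i.1 : ℤ) + 1) * (f (B i) - f (B' i)) + ((j.1 : ℤ) + 1) * (f (B j) - f (B' j)) := by
    rw [← Finset.sum_sub_distrib]
    rw [show (fun k : Fin n => ((k.1 : ℤ) + 1) * f (B k) - ((k.1 : ℤ) + 1) * f (B' k))
        = (fun k : Fin n => ((k.1 : ℤ) + 1) * (f (B k) - f (B' k))) from by
      funext k; ring]
    exact hsupp _ (fun k hki hkj => by rw [hoffd k hki hkj, sub_self, mul_zero])
  have hBj' : B' j = B i := by rw [hBj, hopp, Bool.not_not]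
  have hs : (f (B i) - f (!B i)) * (f (B i) - f (!B i)) = 1 := by
    cases B i <;> simp [hf]
  have htZ : (m:ℤ) ∣ ((j.1:ℤ) - i.1) := by
    rw [hcast, hcast, hdiffsum, hBi, hBj', hopp] at hdvd0
    have hd2 := hdvd0.mul_left (f (B i) - f (!B i))
    have heq : (f (B i) - f (!B i)) *
        (((i.1 : ℤ) + 1) * (f (B i) - f (!B i)) + ((j.1 : ℤ) + 1) * (f (!B i) - f (B i)))
        = (i.1 : ℤ) - j.1 := by linear_combination ((i.1:ℤ) + 1 - ((j.1:ℤ) + 1)) * hs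
    rw [heq] at hd2
    rw [show ((j.1:ℤ) - i.1) = -((i.1:ℤ) - j.1) by ring]
    exact dvd_neg.mpr hd2
  have hdvdN : m ∣ (j.1 - i.1) := by
    have : (m:ℤ) ∣ ((j.1 - i.1 : ℕ) : ℤ) := by
      rwa [Nat.cast_sub hlt.le]
    exact_mod_cast this
  have hm0 : 0 < m := by omega
  obtain ⟨c, hc⟩ := hdvdN
  have hjn : j.1 < n := j.2
  have hc1 : c = 1 := by
    rcases Nat.lt_or_ge c 2 with h2 | h2
    · interval_cases c <;> omega
    · exfalso
      have : 2 * m ≤ m * c := by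
        calc 2 * m = m * 2 := by ring
        _ ≤ m * c := Nat.mul_le_mul_left m h2
      omega
  subst hc1
  omega

open Finset in
theorem stmt15 (n w W : ℕ) (hW : 0 < W) (hn : 4 * W ≤ n)
    (B : Fin n → Bool) (hB : weight B = w) :
    {B' : Fin n → Bool | weight B' = w ∧ tauM (n - 2 * W) B' = tauM (n - 2 * W) B ∧
      hamming B B' = 2}.ncard ≤ 2 * W := by
  classical
  set m := n - 2 * W with hmdef
  have hm2 : 2 * W ≤ m := by omega
  have hmn : n = m + 2 * W := by omega
  set g : ℕ → (Fin n → Bool) := fun a k => if k.1 = a ∨ k.1 = a + m then !B k else B k with hg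
  have hsub : {B' : Fin n → Bool | weight B' = w ∧ tauM m B' = tauM m B ∧
      hamming B B' = 2} ⊆ g '' Set.Iio (2 * W) := by
    rintro B' ⟨hw', ht, hd⟩
    unfold hamming at hd
    obtain ⟨a, b, hab, hD⟩ := Finset.card_eq_two.mp hd
    have hmem : ∀ k, B k ≠ B' k ↔ (k = a ∨ k = b) := by
      intro k
      have := Finset.ext_iff.mp hD k
      simpa using this
    have hval : ∀ k, B' k = if (k = a ∨ k = b) then !B k else B k := by
      intro k
      by_cases hk : k = a ∨ k = b
      · have := (hmem k).mpr hk
        rw [if_pos hk]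
        revert this; cases B k <;> cases B' k <;> simp
      · have h2 : ¬ B k ≠ B' k := fun h => hk ((hmem k).mp h)
        rw [if_neg hk]
        push_neg at h2
        exact h2.symm
    have hww : weight B' = weight B := by rw [hw', hB]
    have habv : a.1 ≠ b.1 := fun h => hab (Fin.ext h)
    rcases Nat.lt_or_ge a.1 b.1 with hlt | hge
    · obtain ⟨h1, h2⟩ := aux15 m W hW hm2 hmn B B' a b hlt hD hww ht
      refine ⟨a.1, h1, ?_⟩
      funext k
      rw [hg]
      dsimp only
      rw [hval k]
      have hcond : (k = a ∨ k = b) ↔ (k.1 = a.1 ∨ k.1 = a.1 + m) := by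
        simp [Fin.ext_iff, h2]
      simp only [hcond]
    · have hlt : b.1 < a.1 := by omega
      have hD' : Finset.univ.filter (fun k => B k ≠ B' k) = {b, a} := by
        rw [hD, Finset.pair_comm]
      obtain ⟨h1, h2⟩ := aux15 m W hW hm2 hmn B B' b a hlt hD' hww ht
      refine ⟨b.1, h1, ?_⟩
      funext k
      rw [hg]
      dsimp only
      rw [hval k]
      have hcond : (k = a ∨ k = b) ↔ (k.1 = b.1 ∨ k.1 = b.1 + m) := by
        simp [Fin.ext_iff, h2, or_comm]
      simp only [hcond]
  have hfinI : (Set.Iio (2 * W) : Set ℕ).Finite := Set.finite_Iio _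
  refine le_trans (Set.ncard_le_ncard hsub (hfinI.image g)) ?_
  refine le_trans (Set.ncard_image_le hfinI) ?_
  rw [show (Set.Iio (2 * W) : Set ℕ) = ↑(Finset.Iio (2 * W)) by simp, Set.ncard_coe_finset]
  simp
end
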